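/- arXiv:1611.04907 — 2 statements merged into one kernel-verified Lean document; each statement's English description precedes it below -/
import Mathlib

section
/- Let q ≥ 1. The closure of the invertible region D_θ is a compact subset of ℝ^q; in particular, D_θ is bounded. -/
/-- Forward recursion for the Barndorff-Nielsen–Schou / Monahan transformation:
`fwdRow ζ k i = θ_{i,k}` (1-based), with `θ_{k,k} = ζ_k` and
`θ_{i,k} = θ_{i,k-1} - ζ_k * θ_{k-i,k-1}` for `1 ≤ i ≤ k-1`. -/
noncomputable def fwdRow (ζ : ℕ → ℝ) : ℕ → ℕ → ℝ
  | 0 => fun _ => 0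
  | (k+1) => fun i =>
      if i = k + 1 then ζ (k + 1)
      else fwdRow ζ k i - ζ (k + 1) * fwdRow ζ k (k + 1 - i)

open Classical in
/-- Reverse recursion: `(invAux q θ d).1` is row `q - d` (i.e. `θ_{·, q-d}`), and
`(invAux q θ d).2` is the proposition that `|θ_{j,j}| < 1` for all `j` with `q - d ≤ j ≤ q`.
Row `q-(d+1)` is given by `θ_{i,k-1} = (θ_{i,k} + θ_{k,k} θ_{k-i,k})/(1-θ_{k,k}^2)` with
`k = q - d` when the diagonal condition holds at all levels `≥ k`, and is `0` otherwise. -/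
noncomputable def invAux (q : ℕ) (θ : ℕ → ℝ) : ℕ → (ℕ → ℝ) × Prop
  | 0 => (θ, |θ q| < 1)
  | (d+1) =>
      let p := invAux q θ d
      let row : ℕ → ℝ := fun i =>
        if p.2 then (p.1 i + p.1 (q - d) * p.1 (q - d - i)) / (1 - (p.1 (q - d)) ^ 2)
        else 0
      (row, p.2 ∧ |row (q - d - 1)| < 1)

/-- Interpret a vector in `ℝ^q` as a 1-based sequence `ℕ → ℝ` (value `0` out of range). -/
def toSeq {q : ℕ} (v : Fin q → ℝ) : ℕ → ℝ :=
  fun n => if h : n - 1 < q then v ⟨n - 1, h⟩ else 0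

/-- The map `B : ℝ^q → ℝ^q`, `B(ζ)_i = θ_{i,q}`. -/
noncomputable def Bmap {q : ℕ} (ζ : Fin q → ℝ) : Fin q → ℝ :=
  fun i => fwdRow (toSeq ζ) q (i.1 + 1)

/-- The map `B⁻ : ℝ^q → ℝ^q`, `B⁻(θ)_i = θ_{i,i}` computed by the reverse recursion. -/
noncomputable def Binv {q : ℕ} (θ : Fin q → ℝ) : Fin q → ℝ :=
  fun i => (invAux q (toSeq θ) (q - (i.1 + 1))).1 (i.1 + 1)

/-- The invertible region `D_θ ⊆ ℝ^q`: all complex roots of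
`θ(z) = 1 - θ_1 z - ⋯ - θ_q z^q` satisfy `|z| > 1`. -/
def invRegion (q : ℕ) : Set (Fin q → ℝ) :=
  {θ | ∀ z : ℂ, 1 - ∑ i : Fin q, (θ i : ℂ) * z ^ (i.1 + 1) = 0 → 1 < ‖z‖}

/-- The open unit cube `D_ζ = (-1,1)^q ⊆ ℝ^q`. -/
def openCube (q : ℕ) : Set (Fin q → ℝ) :=
  {ζ | ∀ i, ζ i ∈ Set.Ioo (-1 : ℝ) 1}

/-
A polynomial all of whose roots lie outside the open unit disc has Mahler measure `‖p(0)‖`, and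
the `n`-th coefficient of any complex polynomial of degree `d` is at most `choose d n` times its
Mahler measure. The MA polynomial has constant term `1` and coefficients `-θᵢ`, so on `D_θ` each
`|θᵢ|` is at most `choose q i`: the region lies in a compact box.
-/

open Polynomial

namespace Polynomial

theorem mahlerMeasure_eq_norm_coeff_zero {p : ℂ[X]} (hp : ∀ z, p.IsRoot z → 1 ≤ ‖z‖) :
    p.mahlerMeasure = ‖p.coeff 0‖ := by
  by_cases h0 : p = 0
  · simp [h0]
  have hroots : p.roots.map (fun a ↦ max 1 ‖a‖) = p.roots.map (‖·‖) :=
    Multiset.map_congr rfl fun a ha ↦ max_eq_right (hp a (isRoot_of_mem_roots ha))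
  rw [mahlerMeasure_eq_leadingCoeff_mul_prod_roots,
    (IsAlgClosed.splits p).coeff_zero_eq_leadingCoeff_mul_prod_roots, hroots]
  have hnorm : ‖p.roots.prod‖ = (p.roots.map (‖·‖)).prod := map_multiset_prod normHom p.roots
  simp [hnorm]

theorem norm_coeff_le_choose_mul_norm_coeff_zero {p : ℂ[X]} (hp : ∀ z, p.IsRoot z → 1 ≤ ‖z‖)
    (n : ℕ) : ‖p.coeff n‖ ≤ p.natDegree.choose n * ‖p.coeff 0‖ :=
  mahlerMeasure_eq_norm_coeff_zero hp ▸ norm_coeff_le_choose_mul_mahlerMeasure n p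

end Polynomial

section MovingAverage

variable {q : ℕ}

noncomputable def maPoly (θ : Fin q → ℝ) : ℂ[X] :=
  1 - ∑ i : Fin q, C (θ i : ℂ) * X ^ (i.1 + 1)

theorem eval_maPoly (θ : Fin q → ℝ) (z : ℂ) :
    (maPoly θ).eval z = 1 - ∑ i : Fin q, (θ i : ℂ) * z ^ (i.1 + 1) := by
  simp [maPoly, eval_finsetSum]

theorem coeff_maPoly_zero (θ : Fin q → ℝ) : (maPoly θ).coeff 0 = 1 := by
  simp [maPoly, coeff_X_pow]

theorem coeff_maPoly_succ (θ : Fin q → ℝ) (i : Fin q) :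
    (maPoly θ).coeff (i.1 + 1) = -(θ i : ℂ) := by
  simp [maPoly, coeff_X_pow, coeff_one, Fin.val_inj]

theorem natDegree_maPoly_le (θ : Fin q → ℝ) : (maPoly θ).natDegree ≤ q := by
  refine (natDegree_sub_le_iff_right (by simp)).2 (natDegree_sum_le_of_forall_le _ _ fun i _ ↦ ?_)
  exact (natDegree_C_mul_X_pow_le _ _).trans i.2

theorem abs_le_choose_of_mem_invRegion {θ : Fin q → ℝ} (hθ : θ ∈ invRegion q) (i : Fin q) :
    |θ i| ≤ q.choose (i.1 + 1) := by
  have hroots : ∀ z, (maPoly θ).IsRoot z → 1 ≤ ‖z‖ := fun z hz ↦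
    (hθ z (by rwa [IsRoot, eval_maPoly] at hz)).le
  have hbound := norm_coeff_le_choose_mul_norm_coeff_zero hroots (i.1 + 1)
  rw [coeff_maPoly_succ, coeff_maPoly_zero, norm_neg, norm_one, mul_one, Complex.norm_real,
    Real.norm_eq_abs] at hbound
  exact hbound.trans (mod_cast Nat.choose_le_choose _ (natDegree_maPoly_le θ))

theorem invRegion_subset_Icc :
    invRegion q ⊆ Set.Icc (-fun i : Fin q ↦ (q.choose (i.1 + 1) : ℝ))
      (fun i ↦ (q.choose (i.1 + 1) : ℝ)) :=
  fun _ hθ ↦ ⟨fun i ↦ neg_le_of_abs_le (abs_le_choose_of_mem_invRegion hθ i),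
    fun i ↦ le_of_abs_le (abs_le_choose_of_mem_invRegion hθ i)⟩

end MovingAverage

theorem closure_invRegion_isCompact_general {q : ℕ} :
    IsCompact (closure (invRegion q)) ∧ Bornology.IsBounded (invRegion q) :=
  ⟨isCompact_Icc.of_isClosed_subset isClosed_closure (closure_minimal invRegion_subset_Icc
    isClosed_Icc), isCompact_Icc.isBounded.subset invRegion_subset_Icc⟩

/-- For `q ≥ 1`, the closure of the invertible region is compact; in particular the
invertible region is bounded. -/
theorem closure_invRegion_isCompact {q : ℕ} (hq : 1 ≤ q) :
    IsCompact (closure (invRegion q)) ∧ Bornology.IsBounded (invRegion q) :=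
  closure_invRegion_isCompact_general
end

section
/- For q = 4, for all ζ_1 ∈ ℝ and all ζ_3, ζ_4 ∈ (−1,1), one has B⁻(−ζ_3(1 + ζ_4), 1 − ζ_4, ζ_3(1 + ζ_4), ζ_4) = (0, 1, ζ_3, ζ_4); in particular B⁻(B(ζ_1, 1, ζ_3, ζ_4)) = (0, 1, ζ_3, ζ_4) regardless of ζ_1. -/
/-!
Each step of the reverse recursion undoes the corresponding forward step: if
`θ_{i,k} = θ_{i,k-1} - ζ_k θ_{k-i,k-1}` and `θ_{k,k} = ζ_k`, then
`θ_{i,k} + ζ_k θ_{k-i,k} = (1 - ζ_k²) θ_{i,k-1}`. Hence, as long as the diagonal entries met so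
far lie in `(-1,1)`, the rows produced by `B⁻` from `B(ζ)` are the forward rows, and their diagonal
entries are the `ζ_k`. For `ζ = (ζ₁, 1, ζ₃, ζ₄)` this recovers `ζ₄, ζ₃` and then `ζ₂ = 1`, at which
point the condition `|ζ₂| < 1` fails and the last row is set to `0`; and `B(ζ₁, 1, ζ₃, ζ₄)` is
the vector `(-ζ₃(1+ζ₄), 1-ζ₄, ζ₃(1+ζ₄), ζ₄)`, whatever `ζ₁`.
-/

section Forward

variable (ζ : ℕ → ℝ) {k i : ℕ}

theorem fwdRow_succ_self (k : ℕ) : fwdRow ζ (k + 1) (k + 1) = ζ (k + 1) := by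
  simp [fwdRow]

theorem fwdRow_succ_of_ne (hi : i ≠ k + 1) :
    fwdRow ζ (k + 1) i = fwdRow ζ k i - ζ (k + 1) * fwdRow ζ k (k + 1 - i) := by
  simp [fwdRow, hi]

theorem fwdRow_succ_reverse (hi : 1 ≤ i) (hik : i ≤ k) (hζ : |ζ (k + 1)| < 1) :
    (fwdRow ζ (k + 1) i + ζ (k + 1) * fwdRow ζ (k + 1) (k + 1 - i)) / (1 - ζ (k + 1) ^ 2) =
      fwdRow ζ k i := by
  have hden : 1 - ζ (k + 1) ^ 2 ≠ 0 := by nlinarith [sq_abs (ζ (k + 1)), abs_nonneg (ζ (k + 1))]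
  rw [fwdRow_succ_of_ne ζ (by omega : i ≠ k + 1), fwdRow_succ_of_ne ζ (by omega : k + 1 - i ≠ k + 1),
    Nat.sub_sub_self (by omega : i ≤ k + 1)]
  field_simp
  ring

end Forward

section Reverse

variable {q d : ℕ} {θ : ℕ → ℝ}

theorem invAux_succ_fst_of_snd (h : (invAux q θ d).2) (i : ℕ) :
    (invAux q θ (d + 1)).1 i =
      ((invAux q θ d).1 i + (invAux q θ d).1 (q - d) * (invAux q θ d).1 (q - d - i)) /
        (1 - (invAux q θ d).1 (q - d) ^ 2) :=
  if_pos h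

theorem invAux_succ_fst_of_not_snd (h : ¬ (invAux q θ d).2) (i : ℕ) :
    (invAux q θ (d + 1)).1 i = 0 :=
  if_neg h

theorem invAux_succ_snd :
    (invAux q θ (d + 1)).2 ↔ (invAux q θ d).2 ∧ |(invAux q θ (d + 1)).1 (q - d - 1)| < 1 :=
  Iff.rfl

theorem invAux_snd_of_le {d' : ℕ} (hd : d ≤ d') (h : (invAux q θ d').2) : (invAux q θ d).2 := by
  induction d', hd using Nat.le_induction with
  | base => exact h
  | succ d' _ ih => exact ih (invAux_succ_snd.1 h).1

theorem invAux_eq_fwdRow {ζ : ℕ → ℝ} (hθ : ∀ i, 1 ≤ i → i ≤ q → θ i = fwdRow ζ q i)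
    (hd : d < q) (hζ : ∀ j, q - d < j → j ≤ q → |ζ j| < 1) :
    (∀ i, 1 ≤ i → i ≤ q - d → (invAux q θ d).1 i = fwdRow ζ (q - d) i) ∧
      ((invAux q θ d).2 ↔ |ζ (q - d)| < 1) := by
  induction d with
  | zero =>
    obtain ⟨k, rfl⟩ : ∃ k, q = k + 1 := ⟨q - 1, by omega⟩
    refine ⟨hθ, ?_⟩
    rw [show (invAux (k + 1) θ 0).2 = (|θ (k + 1)| < 1) from rfl, hθ _ le_add_self le_rfl,
      Nat.sub_zero, fwdRow_succ_self]
  | succ d ih =>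
    obtain ⟨k, hk⟩ : ∃ k, q - d = k + 1 := ⟨q - d - 1, by omega⟩
    obtain ⟨hrow, hsnd⟩ := ih (by omega) fun j hj hjq => hζ j (by omega) hjq
    have hdiag : |ζ (k + 1)| < 1 := hk ▸ hζ (q - d) (by omega) (Nat.sub_le q d)
    rw [hk] at hrow
    have hrow' : ∀ i, 1 ≤ i → i ≤ k → (invAux q θ (d + 1)).1 i = fwdRow ζ k i := by
      intro i hi hik
      rw [invAux_succ_fst_of_snd (hsnd.2 (hk ▸ hdiag)), hk, hrow i hi (by omega),
        hrow (k + 1) (by omega) le_rfl, hrow (k + 1 - i) (by omega) (by omega), fwdRow_succ_self]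
      exact fwdRow_succ_reverse ζ hi hik hdiag
    have hqd : q - (d + 1) = k := by omega
    obtain ⟨k, rfl⟩ : ∃ k', k = k' + 1 := ⟨k - 1, by omega⟩
    refine ⟨hqd ▸ hrow', ?_⟩
    rw [invAux_succ_snd, hqd, show q - d - 1 = k + 1 by omega,
      hrow' (k + 1) le_add_self le_rfl, fwdRow_succ_self]
    exact and_iff_right (hsnd.2 (hk ▸ hdiag))

end Reverse

section Vectors

variable {q : ℕ}

theorem toSeq_of_le (v : Fin q → ℝ) {n : ℕ} (h1 : 1 ≤ n) (hn : n ≤ q) :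
    toSeq v n = v ⟨n - 1, by omega⟩ :=
  dif_pos (by omega)

theorem toSeq_succ (v : Fin q → ℝ) (i : Fin q) : toSeq v ((i : ℕ) + 1) = v i :=
  toSeq_of_le v le_add_self i.2

theorem toSeq_Bmap (ζ : Fin q → ℝ) {n : ℕ} (h1 : 1 ≤ n) (hn : n ≤ q) :
    toSeq (Bmap ζ) n = fwdRow (toSeq ζ) q n := by
  rw [toSeq_of_le _ h1 hn, Bmap, Nat.sub_add_cancel h1]

theorem abs_toSeq_lt_one {ζ : Fin q → ℝ} {i : Fin q} (h : ∀ j, i < j → |ζ j| < 1) :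
    ∀ n, (i : ℕ) + 1 < n → n ≤ q → |toSeq ζ n| < 1 := by
  intro n hin hn
  rw [toSeq_of_le ζ (by omega) hn]
  exact h _ (Fin.lt_def.2 (by simp; omega))

theorem invAux_Bmap_eq_fwdRow (ζ : Fin q → ℝ) (i : Fin q) (h : ∀ j, i < j → |ζ j| < 1) :
    (∀ n, 1 ≤ n → n ≤ (i : ℕ) + 1 → (invAux q (toSeq (Bmap ζ)) (q - ((i : ℕ) + 1))).1 n =
        fwdRow (toSeq ζ) ((i : ℕ) + 1) n) ∧
      ((invAux q (toSeq (Bmap ζ)) (q - ((i : ℕ) + 1))).2 ↔ |ζ i| < 1) := by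
  have hqi : q - (q - ((i : ℕ) + 1)) = (i : ℕ) + 1 := by omega
  have key := invAux_eq_fwdRow (fun n => toSeq_Bmap ζ) (by omega : q - ((i : ℕ) + 1) < q)
    (by rw [hqi]; exact abs_toSeq_lt_one h)
  rwa [hqi, toSeq_succ] at key

theorem Binv_Bmap_apply (ζ : Fin q → ℝ) (i : Fin q) (h : ∀ j, i < j → |ζ j| < 1) :
    Binv (Bmap ζ) i = ζ i := by
  rw [Binv, (invAux_Bmap_eq_fwdRow ζ i h).1 _ le_add_self le_rfl, fwdRow_succ_self, toSeq_succ]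

theorem Binv_Bmap_apply_eq_zero (ζ : Fin q → ℝ) {i j : Fin q} (hij : i < j) (hj : 1 ≤ |ζ j|)
    (h : ∀ l, j < l → |ζ l| < 1) : Binv (Bmap ζ) i = 0 := by
  have hij' : (i : ℕ) < j := hij
  have hlevel : q - ((i : ℕ) + 1) = q - ((i : ℕ) + 2) + 1 := by omega
  rw [Binv, hlevel]
  refine invAux_succ_fst_of_not_snd (fun hsnd => ?_) _
  have hj' := (invAux_Bmap_eq_fwdRow ζ j h).2.1 (invAux_snd_of_le (by omega) hsnd)
  linarith

end Vectors

theorem Bmap_four_of_second_eq_one (ζ1 ζ3 ζ4 : ℝ) :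
    Bmap ![ζ1, (1 : ℝ), ζ3, ζ4] = ![-ζ3 * (1 + ζ4), 1 - ζ4, ζ3 * (1 + ζ4), ζ4] := by
  funext i
  fin_cases i <;> norm_num [Bmap, fwdRow, toSeq] <;> ring

/-- For `q = 4`, all `ζ₁ ∈ ℝ` and all `ζ₃, ζ₄ ∈ (-1,1)`:
`B⁻(-ζ₃(1+ζ₄), 1-ζ₄, ζ₃(1+ζ₄), ζ₄) = (0, 1, ζ₃, ζ₄)`; in particular
`B⁻(B(ζ₁, 1, ζ₃, ζ₄)) = (0, 1, ζ₃, ζ₄)` regardless of `ζ₁`. -/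
theorem Binv_four (ζ1 : ℝ) (ζ3 ζ4 : ℝ)
    (h3 : ζ3 ∈ Set.Ioo (-1 : ℝ) 1) (h4 : ζ4 ∈ Set.Ioo (-1 : ℝ) 1) :
    Binv ![-ζ3 * (1 + ζ4), 1 - ζ4, ζ3 * (1 + ζ4), ζ4] = ![(0 : ℝ), 1, ζ3, ζ4] ∧
    Binv (Bmap ![ζ1, (1 : ℝ), ζ3, ζ4]) = ![(0 : ℝ), 1, ζ3, ζ4] := by
  set ζ : Fin 4 → ℝ := ![ζ1, 1, ζ3, ζ4]
  have hsmall : ∀ j : Fin 4, 1 < j → |ζ j| < 1 := by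
    intro j hj
    fin_cases j <;> simp_all [ζ, abs_lt]
  have hBinv : Binv (Bmap ζ) = ![0, 1, ζ3, ζ4] := by
    funext i
    fin_cases i
    · exact Binv_Bmap_apply_eq_zero ζ (j := 1) (by decide) (by simp [ζ]) hsmall
    all_goals exact Binv_Bmap_apply ζ _ fun j hj => hsmall j (lt_of_le_of_lt (by decide) hj)
  exact ⟨Bmap_four_of_second_eq_one ζ1 ζ3 ζ4 ▸ hBinv, hBinv⟩
end
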